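/- arXiv:1806.00120 — 2 statements merged into one kernel-verified Lean document; each statement's English description precedes it below -/
import Mathlib

section
/- Let 0 < γ < 1, and consider the relaxed discrete energy F[Q] = Σ_{(i,j)∈I, i<j} (γ+1)|Q_{ij}|^{2γ/(γ+1)}·L_{ij} on a finite connected graph with edge lengths L_{ij} > 0, constrained by the local mass conservation Σ_{j∈N(i)} Q_{ij} = S_i at each vertex i (with Q_{ji} = −Q_{ij}). If Q is a global minimizer of F subject to this constraint, then Q contains no loop of nonzero fluxes: there is no cyclic sequence of distinct vertices i₁,...,i_K with edges (i₁,i₂),...,(i_K,i₁) ∈ I all carrying nonzero flux. -/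
open Finset

/-!
Push a small circulation `±t` around a loop of nonzero fluxes. Both perturbed fluxes are still
admissible, and if `t` is below every flux on the loop, no flux changes sign. Since
`s ↦ |s| ^ (2γ/(γ+1))` is strictly concave on each half-line, the two perturbed energies average to
strictly less than `F[Q]`, so one of them beats the minimizer.
-/

theorem abs_add_rpow_add_abs_sub_rpow_lt {α x s : ℝ} (hα0 : 0 < α) (hα1 : α < 1)
    (hs0 : s ≠ 0) (hs : |s| < |x|) :
    |x + s| ^ α + |x - s| ^ α < 2 * |x| ^ α := by
  obtain ⟨hsum, hne⟩ : |x + s| + |x - s| = 2 * |x| ∧ |x + s| ≠ |x - s| := by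
    obtain ⟨hs₁, hs₂⟩ := abs_lt.mp hs
    rcases abs_cases x with ⟨hx, _⟩ | ⟨hx, _⟩ <;> rw [hx] at hs₁ hs₂ ⊢
    · rw [abs_of_pos (by linarith), abs_of_pos (by linarith)]
      exact ⟨by ring, fun h => hs0 (by linarith)⟩
    · rw [abs_of_neg (by linarith), abs_of_neg (by linarith)]
      exact ⟨by ring, fun h => hs0 (by linarith)⟩
  have h := (Real.strictConcaveOn_rpow hα0 hα1).2 (abs_nonneg (x + s)) (abs_nonneg (x - s)) hne
    (by norm_num : (0 : ℝ) < 1 / 2) (by norm_num : (0 : ℝ) < 1 / 2) (by norm_num)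
  simp only [smul_eq_mul] at h
  rw [show 1 / 2 * |x + s| + 1 / 2 * |x - s| = |x| by linarith] at h
  linarith

theorem sum_mul_abs_add_rpow_add_sum_mul_abs_sub_rpow_lt {ι : Type*} [Fintype ι]
    {α : ℝ} (hα0 : 0 < α) (hα1 : α < 1) (w x s : ι → ℝ)
    (hsupp : ∀ i, s i ≠ 0 → 0 < w i ∧ |s i| < |x i|) (hne : ∃ i, s i ≠ 0) :
    ∑ i, w i * |x i + s i| ^ α + ∑ i, w i * |x i - s i| ^ α < 2 * ∑ i, w i * |x i| ^ α := by
  have hlt : ∀ i, s i ≠ 0 →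
      w i * |x i + s i| ^ α + w i * |x i - s i| ^ α < 2 * (w i * |x i| ^ α) := by
    intro i hi
    obtain ⟨hw, hsx⟩ := hsupp i hi
    have := mul_lt_mul_of_pos_left (abs_add_rpow_add_abs_sub_rpow_lt hα0 hα1 hi hsx) hw
    linarith
  obtain ⟨i₀, hi₀⟩ := hne
  rw [← sum_add_distrib, mul_sum]
  refine sum_lt_sum (fun i _ => ?_) ⟨i₀, mem_univ _, hlt i₀ hi₀⟩
  by_cases hi : s i = 0
  · rw [hi, add_zero, sub_zero]; linarith
  · exact (hlt i hi).le

open Filter Topology in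
theorem Finset.exists_pos_forall_lt {ι : Type*} (s : Finset ι) {f : ι → ℝ}
    (hf : ∀ i ∈ s, 0 < f i) : ∃ t > 0, ∀ i ∈ s, t < f i := by
  have h : ∀ᶠ t in 𝓝[>] (0 : ℝ), ∀ i ∈ s, t < f i :=
    (eventually_all_finset s).2 fun i hi => nhdsWithin_le_nhds (eventually_lt_nhds (hf i hi))
  obtain ⟨t, ht, ht0⟩ := (h.and self_mem_nhdsWithin).exists
  exact ⟨t, ht0, ht⟩

section CycleCirculation

variable {V : Type*} [DecidableEq V] (v : ℕ → V) (K : ℕ)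

def cycleEdgeCount (i j : V) : ℝ :=
  ∑ k ∈ range K, if i = v k ∧ j = v (k + 1) then 1 else 0

def cycleCirculation (i j : V) : ℝ :=
  cycleEdgeCount v K i j - cycleEdgeCount v K j i

theorem cycleEdgeCount_nonneg (i j : V) : 0 ≤ cycleEdgeCount v K i j :=
  sum_nonneg fun _ _ => by split_ifs <;> norm_num

theorem cycleCirculation_antisymm (i j : V) :
    cycleCirculation v K i j = -cycleCirculation v K j i :=
  (neg_sub _ _).symm

variable {v K}

theorem cycleEdgeCount_le_one (hinj : Set.InjOn v (Set.Iio K)) (i j : V) :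
    cycleEdgeCount v K i j ≤ 1 := by
  rw [cycleEdgeCount, sum_boole]
  exact_mod_cast card_le_one.mpr fun a ha b hb => by
    simp only [mem_filter, mem_range] at ha hb
    exact hinj ha.1 hb.1 (ha.2.1.symm.trans hb.2.1)

theorem abs_cycleCirculation_le_one (hinj : Set.InjOn v (Set.Iio K)) (i j : V) :
    |cycleCirculation v K i j| ≤ 1 := by
  have := cycleEdgeCount_nonneg v K i j
  have := cycleEdgeCount_nonneg v K j i
  have := cycleEdgeCount_le_one hinj i j
  have := cycleEdgeCount_le_one hinj j i
  exact abs_sub_le_iff.mpr ⟨by linarith, by linarith⟩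

theorem exists_of_cycleCirculation_ne_zero {i j : V} (h : cycleCirculation v K i j ≠ 0) :
    ∃ k < K, (i = v k ∧ j = v (k + 1)) ∨ (j = v k ∧ i = v (k + 1)) := by
  by_contra! hno
  refine h (sub_eq_zero.mpr ?_)
  rw [cycleEdgeCount, cycleEdgeCount, sum_eq_zero, sum_eq_zero] <;>
    exact fun k hk => if_neg fun hk' => by
      have := hno k (mem_range.mp hk)
      tauto

theorem sum_cycleCirculation [Fintype V] (hvK : v K = v 0) (i : V) :
    ∑ j, cycleCirculation v K i j = 0 := by
  have hout : ∑ j, cycleEdgeCount v K i j = ∑ k ∈ range K, if i = v k then 1 else 0 := by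
    simp only [cycleEdgeCount]
    rw [sum_comm]
    exact sum_congr rfl fun k _ => by by_cases h : i = v k <;> simp [h]
  have hin : ∑ j, cycleEdgeCount v K j i = ∑ k ∈ range K, if i = v (k + 1) then 1 else 0 := by
    simp only [cycleEdgeCount]
    rw [sum_comm]
    exact sum_congr rfl fun k _ => by by_cases h : i = v (k + 1) <;> simp [h]
  simp only [cycleCirculation]
  rw [sum_sub_distrib, hout, hin, ← sum_sub_distrib,
    sum_range_sub' (fun k => if i = v k then (1 : ℝ) else 0), hvK, sub_self]

theorem cycleCirculation_pos (hK : 3 ≤ K) (hinj : Set.InjOn v (Set.Iio K)) :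
    0 < cycleCirculation v K (v 0) (v 1) := by
  have hfwd : 1 ≤ cycleEdgeCount v K (v 0) (v 1) := by
    calc (1 : ℝ) = if v 0 = v 0 ∧ v 1 = v (0 + 1) then 1 else 0 := by simp
      _ ≤ cycleEdgeCount v K (v 0) (v 1) :=
        single_le_sum (f := fun k => if v 0 = v k ∧ v 1 = v (k + 1) then (1 : ℝ) else 0)
          (fun _ _ => by split_ifs <;> norm_num) (mem_range.mpr (by omega : 0 < K))
  have hbwd : cycleEdgeCount v K (v 1) (v 0) = 0 := by
    refine sum_eq_zero fun k hk => if_neg ?_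
    rintro ⟨h1, h0⟩
    have hk1 : 1 = k := hinj (by simp; omega) (mem_range.mp hk) h1
    subst hk1
    have := hinj (by simp; omega : (0 : ℕ) ∈ Set.Iio K) (by simp; omega : (2 : ℕ) ∈ Set.Iio K) h0
    omega
  rw [cycleCirculation, hbwd]
  linarith

theorem exists_pos_forall_abs_mul_cycleCirculation_lt {G : SimpleGraph V} {Q : V → V → ℝ}
    (hinj : Set.InjOn v (Set.Iio K)) (hQa : ∀ i j, Q i j = -Q j i)
    (hcyc : ∀ k < K, G.Adj (v k) (v (k + 1)) ∧ Q (v k) (v (k + 1)) ≠ 0) :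
    ∃ t > 0, ∀ i j, cycleCirculation v K i j ≠ 0 →
      G.Adj i j ∧ |t * cycleCirculation v K i j| < |Q i j| := by
  obtain ⟨t, ht0, htQ⟩ := (range K).exists_pos_forall_lt (f := fun k => |Q (v k) (v (k + 1))|)
    fun k hk => abs_pos.mpr (hcyc k (mem_range.mp hk)).2
  have hedge : ∀ i j, cycleCirculation v K i j ≠ 0 → G.Adj i j ∧ t < |Q i j| := by
    intro i j h
    obtain ⟨k, hk, ⟨rfl, rfl⟩ | ⟨rfl, rfl⟩⟩ := exists_of_cycleCirculation_ne_zero h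
    · exact ⟨(hcyc k hk).1, htQ k (mem_range.mpr hk)⟩
    · exact ⟨(hcyc k hk).1.symm, by rw [hQa, abs_neg]; exact htQ k (mem_range.mpr hk)⟩
  refine ⟨t, ht0, fun i j h => ⟨(hedge i j h).1, ?_⟩⟩
  calc |t * cycleCirculation v K i j| = t * |cycleCirculation v K i j| := by
        rw [abs_mul, abs_of_pos ht0]
    _ ≤ t := mul_le_of_le_one_right ht0.le (abs_cycleCirculation_le_one hinj i j)
    _ < |Q i j| := (hedge i j h).2

end CycleCirculation

theorem stmt13_general {V : Type*} [Fintype V] [DecidableEq V]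
    (G : SimpleGraph V)
    (γ : ℝ) (hγ0 : 0 < γ) (hγ1 : γ < 1)
    (L : V → V → ℝ) (hLpos : ∀ i j, G.Adj i j → 0 < L i j)
    (S : V → ℝ)
    (Q : V → V → ℝ)
    (hQa : ∀ i j, Q i j = -Q j i)
    (hQsupp : ∀ i j, ¬ G.Adj i j → Q i j = 0)
    (hcons : ∀ i, ∑ j, Q i j = S i)
    (hmin : ∀ Q' : V → V → ℝ, (∀ i j, Q' i j = -Q' j i) →
      (∀ i j, ¬ G.Adj i j → Q' i j = 0) → (∀ i, ∑ j, Q' i j = S i) →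
      (1 / 2) * ∑ i, ∑ j, (γ + 1) * |Q i j| ^ (2 * γ / (γ + 1)) * L i j ≤
        (1 / 2) * ∑ i, ∑ j, (γ + 1) * |Q' i j| ^ (2 * γ / (γ + 1)) * L i j) :
    ¬ ∃ (K : ℕ) (v : ℕ → V), 3 ≤ K ∧
      (∀ k l, k < K → l < K → v k = v l → k = l) ∧ v K = v 0 ∧
      ∀ k, k < K → G.Adj (v k) (v (k + 1)) ∧ Q (v k) (v (k + 1)) ≠ 0 := by
  rintro ⟨K, v, hK, hinj, hvK, hcyc⟩
  set α := 2 * γ / (γ + 1) with hα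
  have hα0 : 0 < α := by positivity
  have hα1 : α < 1 := by rw [hα, div_lt_one (by linarith)]; linarith
  have hinj' : Set.InjOn v (Set.Iio K) := fun k hk l hl => hinj k l hk hl
  obtain ⟨t, ht0, hC⟩ := exists_pos_forall_abs_mul_cycleCirculation_lt hinj' hQa hcyc
  set C := cycleCirculation v K
  have hCa : ∀ i j, C i j = -C j i := cycleCirculation_antisymm v K
  have hle : ∀ s : ℝ, ∑ i, ∑ j, (γ + 1) * |Q i j| ^ α * L i j ≤
      ∑ i, ∑ j, (γ + 1) * |Q i j + s * C i j| ^ α * L i j := by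
    intro s
    have := hmin (fun i j => Q i j + s * C i j)
      (fun i j => by rw [hQa i j, hCa i j]; ring)
      (fun i j hij => by
        rw [hQsupp i j hij, of_not_not fun h => hij (hC i j h).1]; ring)
      (fun i => by
        rw [sum_add_distrib, hcons, ← mul_sum, sum_cycleCirculation hvK, mul_zero, add_zero])
    beta_reduce at this
    linarith
  have hlt := sum_mul_abs_add_rpow_add_sum_mul_abs_sub_rpow_lt hα0 hα1
    (fun p : V × V => (γ + 1) * L p.1 p.2) (fun p => Q p.1 p.2) (fun p => t * C p.1 p.2)
    (fun p hp => have hp' := hC _ _ (right_ne_zero_of_mul hp)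
      ⟨mul_pos (by linarith) (hLpos _ _ hp'.1), hp'.2⟩)
    ⟨(v 0, v 1), mul_ne_zero ht0.ne' (cycleCirculation_pos hK hinj').ne'⟩
  simp only [Fintype.sum_prod_type, mul_right_comm (γ + 1) (L _ _)] at hlt
  have h₁ := hle t
  have h₂ := hle (-t)
  simp only [neg_mul, ← sub_eq_add_neg] at h₂
  linarith

/-- For `0 < γ < 1`, a global minimizer of the relaxed discrete energy
`F[Q] = (1/2)·Σ_{i,j} (γ+1)|Q_{ij}|^(2γ/(γ+1))·L_{ij}` subject to local mass
conservation contains no loop of nonzero fluxes. -/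
theorem stmt13 {V : Type*} [Fintype V] [DecidableEq V]
    (G : SimpleGraph V) [DecidableRel G.Adj] (hG : G.Connected)
    (γ : ℝ) (hγ0 : 0 < γ) (hγ1 : γ < 1)
    (L : V → V → ℝ) (hLsym : ∀ i j, L i j = L j i) (hLpos : ∀ i j, G.Adj i j → 0 < L i j)
    (S : V → ℝ) (hS : ∑ i, S i = 0)
    (Q : V → V → ℝ)
    (hQa : ∀ i j, Q i j = -Q j i)
    (hQsupp : ∀ i j, ¬ G.Adj i j → Q i j = 0)
    (hcons : ∀ i, ∑ j, Q i j = S i)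
    (hmin : ∀ Q' : V → V → ℝ, (∀ i j, Q' i j = -Q' j i) →
      (∀ i j, ¬ G.Adj i j → Q' i j = 0) → (∀ i, ∑ j, Q' i j = S i) →
      (1 / 2) * ∑ i, ∑ j, (γ + 1) * |Q i j| ^ (2 * γ / (γ + 1)) * L i j ≤
        (1 / 2) * ∑ i, ∑ j, (γ + 1) * |Q' i j| ^ (2 * γ / (γ + 1)) * L i j) :
    ¬ ∃ (K : ℕ) (v : ℕ → V), 3 ≤ K ∧
      (∀ k l, k < K → l < K → v k = v l → k = l) ∧ v K = v 0 ∧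
      ∀ k, k < K → G.Adj (v k) (v (k + 1)) ∧ Q (v k) (v (k + 1)) ≠ 0 :=
  stmt13_general G γ hγ0 hγ1 L hLpos S Q hQa hQsupp hcons hmin
end

section
/- Let C be a finite nonnegative measure and Q a finite signed measure on a measurable space X, with Q absolutely continuous with respect to C and density u = dQ/dC. Then for c₀ > 0, the extended energy Ẽ[C,Q] := sup{∫(2c₀²a + 1)dC + ∫b dQ : (a,b) measurable bounded with a + b²/2 ≤ 0 pointwise} satisfies the lower bound Ẽ[C,Q] ≥ (1/2)|C|(X) + (1/(√2·c₀))|Q|(X), where |·| denotes total variation. -/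
/-! The supremum is at least its value at the test pair `a ≡ -1/(4c₀²)`, `b = sign u / (√2 c₀)`:
since `sign² ≤ 1` the pair satisfies `a + b²/2 ≤ 0`, and it makes `2c₀²a + 1 ≡ 1/2` and
`b u = |u| / (√2 c₀)`, so its energy is exactly the claimed lower bound. -/

open MeasureTheory

namespace Real

lemma measurable_sign : Measurable Real.sign :=
  Measurable.ite measurableSet_Iio measurable_const
    (Measurable.ite measurableSet_Ioi measurable_const measurable_const)

lemma abs_sign_le_one (r : ℝ) : |Real.sign r| ≤ 1 := by
  rcases Real.sign_apply_eq r with h | h | h <;> simp [h]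

lemma sign_mul_self (r : ℝ) : Real.sign r * r = |r| := by
  rcases lt_trichotomy r 0 with h | rfl | h
  · rw [Real.sign_of_neg h, abs_of_neg h, neg_one_mul]
  · simp
  · rw [Real.sign_of_pos h, abs_of_pos h, one_mul]

end Real

lemma sq_div_sqrt_two_mul_div_two_le {s : ℝ} (hs : |s| ≤ 1) (c : ℝ) :
    (s / (Real.sqrt 2 * c)) ^ 2 / 2 ≤ 1 / (4 * c ^ 2) := by
  have hs2 : s ^ 2 ≤ 1 := by nlinarith [sq_abs s, abs_nonneg s]
  rw [div_pow, mul_pow, Real.sq_sqrt zero_le_two, div_div,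
    show 2 * c ^ 2 * 2 = 4 * c ^ 2 by ring]
  gcongr

lemma abs_sign_div_le (r c : ℝ) : |Real.sign r / c| ≤ 1 / |c| := by
  rw [abs_div]
  gcongr
  exact Real.abs_sign_le_one r

lemma integral_sign_div_mul_self {X : Type*} [MeasurableSpace X] (μ : Measure X)
    (u : X → ℝ) (c : ℝ) :
    ∫ x, Real.sign (u x) / c * u x ∂μ = 1 / c * ∫ x, |u x| ∂μ := by
  simp_rw [← Real.sign_mul_self, ← integral_const_mul]
  congr 1 with x
  ring

theorem stmt19_general {X : Type*} [MeasurableSpace X]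
    (C : Measure X) [IsFiniteMeasure C] (c₀ : ℝ) (hc₀ : 0 < c₀)
    (u : X → ℝ) (hum : Measurable u) :
    (((1 / 2) * (C Set.univ).toReal +
        (1 / (Real.sqrt 2 * c₀)) * ∫ x, |u x| ∂C : ℝ) : EReal) ≤
      sSup {e : EReal | ∃ a b : X → ℝ, Measurable a ∧ Measurable b ∧
        (∀ x, a x + (b x) ^ 2 / 2 ≤ 0) ∧ (∃ M : ℝ, ∀ x, |a x| ≤ M ∧ |b x| ≤ M) ∧
        e = ((∫ x, (2 * c₀ ^ 2 * a x + 1) ∂C + ∫ x, b x * u x ∂C : ℝ) : EReal)} := by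
  apply le_sSup
  refine ⟨fun _ ↦ -(1 / (4 * c₀ ^ 2)), fun x ↦ Real.sign (u x) / (Real.sqrt 2 * c₀),
    measurable_const, (Real.measurable_sign.comp hum).div_const _, fun x ↦ ?_,
    ⟨1 / (4 * c₀ ^ 2) + 1 / |Real.sqrt 2 * c₀|, fun x ↦ ⟨?_, ?_⟩⟩, ?_⟩
  · linarith [sq_div_sqrt_two_mul_div_two_le (Real.abs_sign_le_one (u x)) c₀]
  · rw [abs_neg, abs_of_nonneg (by positivity)]
    linarith [show 0 ≤ 1 / |Real.sqrt 2 * c₀| by positivity]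
  · linarith [abs_sign_div_le (u x) (Real.sqrt 2 * c₀),
      show 0 ≤ 1 / (4 * c₀ ^ 2) by positivity]
  · have hhalf : 2 * c₀ ^ 2 * -(1 / (4 * c₀ ^ 2)) + 1 = 1 / 2 := by field_simp; ring
    dsimp only
    rw [integral_sign_div_mul_self, hhalf, integral_const, smul_eq_mul, mul_comm, measureReal_def]

/-- Lower bound for the extended relaxed energy: with `Q = u·C`,
`Ẽ[C,Q] ≥ (1/2)|C|(X) + (1/(√2 c₀))|Q|(X)`. -/
theorem stmt19 {X : Type*} [MeasurableSpace X]
    (C : Measure X) [IsFiniteMeasure C] (c₀ : ℝ) (hc₀ : 0 < c₀)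
    (u : X → ℝ) (hu : Integrable u C) (hum : Measurable u) :
    (((1 / 2) * (C Set.univ).toReal +
        (1 / (Real.sqrt 2 * c₀)) * ∫ x, |u x| ∂C : ℝ) : EReal) ≤
      sSup {e : EReal | ∃ a b : X → ℝ, Measurable a ∧ Measurable b ∧
        (∀ x, a x + (b x) ^ 2 / 2 ≤ 0) ∧ (∃ M : ℝ, ∀ x, |a x| ≤ M ∧ |b x| ≤ M) ∧
        e = ((∫ x, (2 * c₀ ^ 2 * a x + 1) ∂C + ∫ x, b x * u x ∂C : ℝ) : EReal)} :=
  stmt19_general C c₀ hc₀ u hum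
end
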